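/- arXiv:2201.06694 — 4 statements merged into one kernel-verified Lean document; each statement's English description precedes it below -/
import Mathlib

section
/- Let Π = Π(ρ, F) be the transition matrix of the network formation game on the set of networks S = (E → Bool). Then for every natural number τ and all networks g, w ∈ S, the (g, w) entry of the matrix power Π^τ is strictly positive if and only if the Hamming distance between g and w is at most τ. -/
open Matrix Finset Filter

/-- Flip the link `e` in network `g`. -/
def flipL {E : Type*} [DecidableEq E] (e : E) (g : E → Bool) : E → Bool :=
  Function.update g e (!(g e))

/-- The one-step transition matrix of the network formation game. -/
noncomputable def netPi {E : Type*} [DecidableEq E] [Fintype E]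
    (ρ : E → (E → Bool) → ℝ) (F : (E → Bool) → E → ℝ) :
    Matrix (E → Bool) (E → Bool) ℝ :=
  Matrix.of fun g w =>
    if g = w then ∑ e, ρ e g * (1 - F g e)
    else ∑ e, if w = flipL e g then ρ e g * F g e else 0

/-- A meeting function: strictly positive selection probabilities summing to one. -/
def IsMeeting {E : Type*} [Fintype E] (ρ : E → (E → Bool) → ℝ) : Prop :=
  (∀ e g, 0 < ρ e g) ∧ ∀ g, ∑ e, ρ e g = 1

/-- An acceptance function: probabilities strictly between 0 and 1, complementary under flips. -/
def IsAcceptance {E : Type*} [DecidableEq E] (F : (E → Bool) → E → ℝ) : Prop :=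
  (∀ g e, 0 < F g e ∧ F g e < 1) ∧ ∀ g e, F g e + F (flipL e g) e = 1

section Aux

variable {E : Type*} [DecidableEq E] [Fintype E]

lemma netPi_nonneg (ρ : E → (E → Bool) → ℝ) (F : (E → Bool) → E → ℝ)
    (hρ : IsMeeting ρ) (hF : IsAcceptance F) (g w : E → Bool) :
    0 ≤ netPi ρ F g w := by
  unfold netPi
  simp only [Matrix.of_apply]
  split_ifs with h
  · exact Finset.sum_nonneg fun e _ => mul_nonneg (hρ.1 e g).le
      (by linarith [(hF.1 g e).2])
  · refine Finset.sum_nonneg fun e _ => ?_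
    split_ifs with h'
    · exact mul_nonneg (hρ.1 e g).le (hF.1 g e).1.le
    · exact le_rfl

lemma pow_netPi_nonneg (ρ : E → (E → Bool) → ℝ) (F : (E → Bool) → E → ℝ)
    (hρ : IsMeeting ρ) (hF : IsAcceptance F) (n : ℕ) (g w : E → Bool) :
    0 ≤ (netPi ρ F ^ n) g w := by
  induction n generalizing g w with
  | zero => simp [Matrix.one_apply]; positivity
  | succ n ih =>
    rw [pow_succ', Matrix.mul_apply]
    exact Finset.sum_nonneg fun u _ =>
      mul_nonneg (netPi_nonneg ρ F hρ hF g u) (ih u w)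

lemma flipL_ne (e : E) (g : E → Bool) : flipL e g ≠ g := by
  intro h
  have := congrFun h e
  simp [flipL] at this

lemma netPi_diag_pos [Nonempty E] (ρ : E → (E → Bool) → ℝ) (F : (E → Bool) → E → ℝ)
    (hρ : IsMeeting ρ) (hF : IsAcceptance F) (g : E → Bool) :
    0 < netPi ρ F g g := by
  unfold netPi
  simp only [Matrix.of_apply, if_pos rfl]
  exact Finset.sum_pos (fun e _ => mul_pos (hρ.1 e g) (by linarith [(hF.1 g e).2]))
    Finset.univ_nonempty

lemma netPi_flip_pos (ρ : E → (E → Bool) → ℝ) (F : (E → Bool) → E → ℝ)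
    (hρ : IsMeeting ρ) (hF : IsAcceptance F) (g : E → Bool) (e : E) :
    0 < netPi ρ F g (flipL e g) := by
  unfold netPi
  simp only [Matrix.of_apply, if_neg (Ne.symm (flipL_ne e g))]
  refine Finset.sum_pos' (fun e' _ => ?_) ⟨e, Finset.mem_univ e, ?_⟩
  · split_ifs with h'
    · exact mul_pos (hρ.1 e' g) (hF.1 g e').1 |>.le
    · exact le_rfl
  · rw [if_pos rfl]
    exact mul_pos (hρ.1 e g) (hF.1 g e).1

lemma hammingDist_flipL (e : E) (g : E → Bool) : hammingDist g (flipL e g) = 1 := by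
  unfold hammingDist
  rw [Finset.card_eq_one]
  refine ⟨e, ?_⟩
  ext e'
  rw [Finset.mem_filter_univ]; simp only [Finset.mem_filter, Finset.mem_univ, true_and, Finset.mem_singleton, flipL]
  constructor
  · intro h
    by_contra hne
    rw [Function.update_of_ne hne] at h
    exact h rfl
  · rintro rfl; simp

lemma netPi_pos_dist (ρ : E → (E → Bool) → ℝ) (F : (E → Bool) → E → ℝ)
    (hρ : IsMeeting ρ) (hF : IsAcceptance F) (g w : E → Bool)
    (h : 0 < netPi ρ F g w) : hammingDist g w ≤ 1 := by
  by_cases hgw : g = w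
  · subst hgw; simp
  · unfold netPi at h
    simp only [Matrix.of_apply, if_neg hgw] at h
    obtain ⟨e, _, he⟩ := Finset.exists_lt_of_sum_lt
      (show ∑ _e : E, (0:ℝ) < ∑ e, ite (w = flipL e g) (ρ e g * F g e) 0 by simpa using h)
    by_cases hw : w = flipL e g
    · rw [hw, hammingDist_flipL]
    · rw [if_neg hw] at he; exact absurd he (lt_irrefl 0)

lemma hammingDist_flip_lt (e : E) (g w : E → Bool) (h : g e ≠ w e) :
    hammingDist (flipL e g) w < hammingDist g w := by
  unfold hammingDist
  apply Finset.card_lt_card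
  constructor
  · intro e' he'
    simp only [Finset.mem_filter, Finset.mem_univ, true_and] at *
    by_cases hee : e' = e
    · subst hee; exact h
    · simpa [flipL, Function.update_of_ne hee] using he'
  · intro hsub
    have he : e ∈ Finset.univ.filter fun e' => g e' ≠ w e' := by simp [h]
    have := hsub he
    rw [Finset.mem_filter_univ] at this; simp only [Finset.mem_filter, Finset.mem_univ, true_and, flipL] at this
    apply this
    simp only [Function.update_self]
    cases hg : g e <;> cases hw : w e <;> simp_all

end Aux

/-- The `(g, w)` entry of `Π^τ` is strictly positive iff the Hamming distance
between `g` and `w` is at most `τ`. -/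
theorem powEntry_pos_iff_hammingDist_le {E : Type*} [DecidableEq E] [Fintype E] [Nonempty E]
    (ρ : E → (E → Bool) → ℝ) (F : (E → Bool) → E → ℝ)
    (hρ : IsMeeting ρ) (hF : IsAcceptance F) :
    ∀ (τ : ℕ) (g w : E → Bool), 0 < (netPi ρ F ^ τ) g w ↔ hammingDist g w ≤ τ := by
  intro τ
  induction τ with
  | zero =>
    intro g w
    simp only [pow_zero, Matrix.one_apply, Nat.le_zero, hammingDist_eq_zero]
    split_ifs with h <;> simp [h]
  | succ n ih =>
    intro g w
    rw [pow_succ', Matrix.mul_apply]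
    constructor
    · intro h
      by_contra hd
      push_neg at hd
      have : ∀ u ∈ Finset.univ, netPi ρ F g u * (netPi ρ F ^ n) u w ≤ 0 := by
        intro u _
        rcases lt_or_eq_of_le (netPi_nonneg ρ F hρ hF g u) with h1 | h1
        · rcases lt_or_eq_of_le (pow_netPi_nonneg ρ F hρ hF n u w) with h2 | h2
          · exfalso
            have d1 := netPi_pos_dist ρ F hρ hF g u h1
            have d2 := (ih u w).mp h2
            have := hammingDist_triangle g u w
            omega
          · rw [← h2, mul_zero]
        · rw [← h1, zero_mul]
      linarith [Finset.sum_nonpos this, h]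
    · intro h
      by_cases hle : hammingDist g w ≤ n
      · refine Finset.sum_pos' (fun u _ => mul_nonneg (netPi_nonneg ρ F hρ hF g u)
          (pow_netPi_nonneg ρ F hρ hF n u w)) ⟨g, Finset.mem_univ g, ?_⟩
        exact mul_pos (netPi_diag_pos ρ F hρ hF g) ((ih g w).mpr hle)
      · have hne : g ≠ w := by
          intro hgw; subst hgw; simp [hammingDist_self] at hle
        obtain ⟨e, he⟩ := Function.ne_iff.mp hne
        refine Finset.sum_pos' (fun u _ => mul_nonneg (netPi_nonneg ρ F hρ hF g u)
          (pow_netPi_nonneg ρ F hρ hF n u w)) ⟨flipL e g, Finset.mem_univ _, ?_⟩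
        refine mul_pos (netPi_flip_pos ρ F hρ hF g e) ((ih _ w).mpr ?_)
        have := hammingDist_flip_lt e g w he
        omega
end

section
/- Strict monotonicity of the limiting transition probability (identification step in the proof of Proposition 3.1): let a, b ∈ ℝ with 0 < a ≤ 1 and 0 < b ≤ 1. For φ ∈ ℝ, define L : ℕ → ℝ → ℝ recursively by L 0 φ = 0 and L (τ+1) φ = (1 − L τ φ) * a * φ + (L τ φ) * (1 − b * (1 − φ)). Then for every φ ∈ [0,1] and every τ, L τ φ ∈ [0,1]; and for every τ ≥ 1, the map φ ↦ L τ φ is strictly increasing on the interval [0,1]. (Consequently the parameter φ = F_{ij}(g,w) is identified from the limiting τ-step transition probability.) -/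
open Set

section TransitionStep

variable {a b : ℝ}

lemma transitionStep_mem_Icc (ha : a ∈ Icc (0 : ℝ) 1) (hb : b ∈ Icc (0 : ℝ) 1) {p φ : ℝ}
    (hp : p ∈ Icc (0 : ℝ) 1) (hφ : φ ∈ Icc (0 : ℝ) 1) :
    (1 - p) * a * φ + p * (1 - b * (1 - φ)) ∈ Icc (0 : ℝ) 1 := by
  obtain ⟨ha0, ha1⟩ := ha
  obtain ⟨hb0, hb1⟩ := hb
  obtain ⟨hp0, hp1⟩ := hp
  obtain ⟨hφ0, hφ1⟩ := hφ
  have haφ : a * φ ∈ Icc (0 : ℝ) 1 := ⟨by positivity, by nlinarith⟩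
  have hbφ : 1 - b * (1 - φ) ∈ Icc (0 : ℝ) 1 :=
    ⟨by nlinarith, by nlinarith [mul_nonneg hb0 (sub_nonneg.2 hφ1)]⟩
  have hcombo := convex_Icc (0 : ℝ) 1 haφ hbφ (sub_nonneg.2 hp1) hp0 (sub_add_cancel 1 p)
  simpa only [smul_eq_mul, mul_assoc] using hcombo

lemma transitionStep_lt_transitionStep (ha : a ∈ Ioc (0 : ℝ) 1) (hb : b ∈ Ioc (0 : ℝ) 1)
    {p q φ ψ : ℝ} (hp : p ∈ Icc (0 : ℝ) 1) (hpq : p ≤ q) (hψ : ψ ∈ Icc (0 : ℝ) 1) (hφψ : φ < ψ) :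
    (1 - p) * a * φ + p * (1 - b * (1 - φ)) < (1 - q) * a * ψ + q * (1 - b * (1 - ψ)) := by
  obtain ⟨ha0, ha1⟩ := ha
  obtain ⟨hb0, hb1⟩ := hb
  obtain ⟨hp0, hp1⟩ := hp
  obtain ⟨hψ0, hψ1⟩ := hψ
  -- The increment splits along `p ≤ q` and `φ < ψ`; both coefficients are convex
  -- combinations of `a` and `b`, hence lie in `(0, 1]`.
  have hdiff : (1 - q) * a * ψ + q * (1 - b * (1 - ψ)) - ((1 - p) * a * φ + p * (1 - b * (1 - φ)))
      = (q - p) * (1 - (a * ψ + b * (1 - ψ))) + (ψ - φ) * ((1 - p) * a + p * b) := by ring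
  have hψ_coeff : a * ψ + b * (1 - ψ) ≤ 1 := by nlinarith
  have hp_coeff : 0 < (1 - p) * a + p * b := by
    nlinarith [mul_nonneg (mul_nonneg (sub_nonneg.2 hp1) ha0.le) (sub_nonneg.2 hb1),
      mul_nonneg (mul_nonneg hp0 hb0.le) (sub_nonneg.2 ha1), mul_pos ha0 hb0]
  linarith [mul_nonneg (sub_nonneg.2 hpq) (sub_nonneg.2 hψ_coeff),
    mul_pos (sub_pos.2 hφψ) hp_coeff]

end TransitionStep

/-- Strict monotonicity of the limiting transition probability (identification step in
the proof of Proposition 3.1): the recursively defined limiting `τ`-step transition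
probability `L τ φ` lies in `[0,1]` for `φ ∈ [0,1]`, and for `τ ≥ 1` it is strictly
increasing in the acceptance probability `φ` on `[0,1]`. -/
theorem limiting_prob_mem_and_strictMono (a b : ℝ)
    (ha : 0 < a ∧ a ≤ 1) (hb : 0 < b ∧ b ≤ 1)
    (L : ℕ → ℝ → ℝ) (hL0 : ∀ φ : ℝ, L 0 φ = 0)
    (hLrec : ∀ (τ : ℕ) (φ : ℝ),
      L (τ + 1) φ = (1 - L τ φ) * a * φ + L τ φ * (1 - b * (1 - φ))) :
    (∀ τ : ℕ, ∀ φ ∈ Set.Icc (0 : ℝ) 1, L τ φ ∈ Set.Icc (0 : ℝ) 1) ∧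
    (∀ τ : ℕ, 1 ≤ τ → StrictMonoOn (L τ) (Set.Icc (0 : ℝ) 1)) := by
  have hmem : ∀ τ : ℕ, ∀ φ ∈ Icc (0 : ℝ) 1, L τ φ ∈ Icc (0 : ℝ) 1 := by
    intro τ
    induction τ with
    | zero => intro φ _; simp [hL0]
    | succ τ ih =>
      intro φ hφ
      rw [hLrec]
      exact transitionStep_mem_Icc ⟨ha.1.le, ha.2⟩ ⟨hb.1.le, hb.2⟩ (ih φ hφ) hφ
  have hstrictMono_succ : ∀ τ : ℕ, MonotoneOn (L τ) (Icc 0 1) →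
      StrictMonoOn (L (τ + 1)) (Icc 0 1) := by
    intro τ hmono φ hφ ψ hψ hφψ
    rw [hLrec, hLrec]
    exact transitionStep_lt_transitionStep ha hb (hmem τ φ hφ) (hmono hφ hψ hφψ.le) hψ hφψ
  refine ⟨hmem, fun τ hτ => ?_⟩
  induction τ, hτ using Nat.le_induction with
  | base => exact hstrictMono_succ 0 fun φ _ ψ _ _ => by simp [hL0]
  | succ τ _ ih => exact hstrictMono_succ τ ih.monotoneOn
end

section
/- Extension of Lemma 4.1 to independent, non-identically distributed observations: let (Ω, 𝓕, P) be a probability space, τ₀ a natural number, and (X_c)_{c ∈ ℕ} a sequence of independent ℕ-valued random variables on Ω such that X_c ≤ τ₀ almost surely for every c, and such that limsup_{c → ∞} P[X_c < τ₀] < 1. Then almost surely there exists c with X_c = τ₀, and the running maximum τ̂_k = max_{c < k} X_c converges almost surely to τ₀ as k → ∞. -/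
/-!
Let `p_c = P[X_c = τ₀]`. Since `X_c ≤ τ₀` a.s., `P[X_c < τ₀] = 1 - p_c`; if `∑ p_c` were finite
then `p_c → 0` and `P[X_c < τ₀] → 1`, contradicting the limsup bound. So `∑ p_c = ∞`, and the
second Borel–Cantelli lemma for the independent events `{X_c = τ₀}` shows that a.s. `X_c = τ₀`
for some (indeed infinitely many) `c`. From that index on, the running maximum of a sequence
bounded by `τ₀` is exactly `τ₀`.
-/

open MeasureTheory ProbabilityTheory Filter

section
variable {Ω ι β : Type*} {mΩ : MeasurableSpace Ω} {μ : Measure Ω} [MeasurableSpace β]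

theorem ProbabilityTheory.iIndepFun.iIndepSet_preimage {X : ι → Ω → β} (h : iIndepFun X μ)
    {t : ι → Set β} (ht : ∀ i, MeasurableSet (t i)) : iIndepSet (fun i => X i ⁻¹' t i) μ :=
  iIndep_of_iIndep_of_le h fun i =>
    MeasurableSpace.generateFrom_le fun _ hs => hs ▸ ⟨t i, ht i, rfl⟩

theorem MeasureTheory.prob_lt_eq_one_sub_prob_eq [IsProbabilityMeasure μ] [LinearOrder β]
    [MeasurableSingletonClass β] {Y : Ω → β} (hY : Measurable Y) {a : β}
    (hle : ∀ᵐ ω ∂μ, Y ω ≤ a) : μ {ω | Y ω < a} = 1 - μ (Y ⁻¹' {a}) := by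
  have hae : {ω | Y ω < a} =ᵐ[μ] ((Y ⁻¹' {a})ᶜ : Set Ω) := by
    refine eventuallyEq_set.2 ?_
    filter_upwards [hle] with ω hω
    simp [hω.lt_iff_ne]
  rw [measure_congr hae, prob_compl_eq_one_sub (hY (measurableSet_singleton a))]

theorem ProbabilityTheory.ae_frequently_mem_of_iIndepSet {s : ℕ → Set Ω}
    (hsm : ∀ n, MeasurableSet (s n)) (hs : iIndepSet s μ) (hs' : ∑' n, μ (s n) = ⊤) :
    ∀ᵐ ω ∂μ, ∃ᶠ n in atTop, ω ∈ s n := by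
  have := hs.isProbabilityMeasure
  have hlim := measure_limsup_eq_one hsm hs hs'
  rw [← measure_univ (μ := μ)] at hlim
  have hmem : ∀ᵐ ω ∂μ, ω ∈ limsup s atTop :=
    (ae_mem_iff_measure_eq (MeasurableSet.measurableSet_limsup hsm).nullMeasurableSet).2 hlim
  filter_upwards [hmem] with ω hω
  exact mem_limsup_iff_frequently_mem.1 hω
end

theorem ENNReal.tsum_eq_top_of_limsup_one_sub_lt_one {f : ℕ → ENNReal}
    (hf : limsup (fun n => 1 - f n) atTop < 1) : ∑' n, f n = ⊤ := by
  by_contra htop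
  have hone : Tendsto (fun n => 1 - f n) atTop (nhds 1) := by
    simpa using ENNReal.Tendsto.sub tendsto_const_nhds
      (ENNReal.tendsto_atTop_zero_of_tsum_ne_top htop) (Or.inl ENNReal.one_ne_top)
  exact hf.ne hone.limsup_eq

theorem Finset.eventually_range_sup_eq {α : Type*} [SemilatticeSup α] [OrderBot α] {x : ℕ → α}
    {a : α} (hle : ∀ n, x n ≤ a) {m : ℕ} (hm : x m = a) :
    ∀ᶠ k in atTop, (Finset.range k).sup x = a := by
  filter_upwards [eventually_gt_atTop m] with k hk
  exact le_antisymm (Finset.sup_le fun n _ => hle n) (hm ▸ Finset.le_sup (Finset.mem_range.2 hk))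

/-- Extension of Lemma 4.1 to independent, non-identically distributed observations:
if the `X c` are independent, bounded a.s. by `τ₀`, and
`limsup_c P[X c < τ₀] < 1`, then a.s. some observation equals `τ₀` and the running
maximum converges a.s. to `τ₀`. -/
theorem running_max_consistent_inid {Ω : Type*} [MeasurableSpace Ω]
    (P : Measure Ω) [IsProbabilityMeasure P] (τ₀ : ℕ) (X : ℕ → Ω → ℕ)
    (hmeas : ∀ c, Measurable (X c))
    (hindep : iIndepFun X P)
    (hbound : ∀ c, ∀ᵐ ω ∂P, X c ω ≤ τ₀)
    (hlimsup : Filter.limsup (fun c => P {ω | X c ω < τ₀}) atTop < 1) :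
    ∀ᵐ ω ∂P, (∃ c, X c ω = τ₀) ∧
      Tendsto (fun k => (Finset.range k).sup (fun c => X c ω)) atTop (nhds τ₀) := by
  have hsum : ∑' c, P (X c ⁻¹' {τ₀}) = ⊤ := by
    refine ENNReal.tsum_eq_top_of_limsup_one_sub_lt_one ?_
    simpa only [prob_lt_eq_one_sub_prob_eq (hmeas _) (hbound _)] using hlimsup
  have hfreq := ae_frequently_mem_of_iIndepSet (fun c => hmeas c (measurableSet_singleton τ₀))
    (hindep.iIndepSet_preimage fun _ => measurableSet_singleton τ₀) hsum
  filter_upwards [hfreq, ae_all_iff.2 hbound] with ω hω hle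
  obtain ⟨c, hc⟩ := hω.exists
  exact ⟨⟨c, hc⟩, tendsto_const_nhds.congr'
    ((Finset.eventually_range_sup_eq hle hc).mono fun _ h => h.symm)⟩
end

section
/- Uniqueness of diagonalizable nonnegative-spectrum matrix roots (kernel of Corollary 3.1): let n and τ be natural numbers with τ ≥ 1, and let A and B be n × n real matrices that are each diagonalizable with nonnegative eigenvalues; that is, A = P * D * P⁻¹ and B = Q * M * Q⁻¹ for some invertible real matrices P, Q and diagonal real matrices D, M all of whose diagonal entries are nonnegative. If A^τ = B^τ, then A = B. (Hence a transition matrix that is diagonalizable with nonnegative eigenvalues is uniquely determined, within that class, by its τ₀-th power.) -/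
/-!
Let `p` be a polynomial that sends `x ^ τ` back to `x` for every diagonal entry `x` of `d` and of
`m` (Lagrange interpolation; the nodes are distinct because `x ↦ x ^ τ` is injective on `[0, ∞)`).
A polynomial acts on `P * diagonal d * P⁻¹` entrywise on `d`, so `p (A ^ τ) = A` and
`p (B ^ τ) = B`, whence `A = p (A ^ τ) = p (B ^ τ) = B`.
-/

open Polynomial Matrix

namespace Matrix

variable {R n : Type*} [CommRing R] [Fintype n] [DecidableEq n]

theorem aeval_conj (P X : Matrix n n R) (hP : IsUnit P.det) (p : R[X]) :
    aeval (P * X * P⁻¹) p = P * aeval X p * P⁻¹ := by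
  lift P to (Matrix n n R)ˣ using (isUnit_iff_isUnit_det P).mpr hP
  rw [← coe_units_inv]
  exact aeval_algHom_apply (MulSemiringAction.toAlgHom R _ (ConjAct.toConjAct P)) X p

theorem aeval_diagonal (d : n → R) (p : R[X]) :
    aeval (diagonal d) p = diagonal fun i => p.eval (d i) := by
  simpa [aeval_pi_apply] using aeval_algHom_apply (diagonalAlgHom R) d p

theorem aeval_pow_conj_diagonal_eq_self {P : Matrix n n R} (hP : IsUnit P.det) {d : n → R}
    {k : ℕ} {p : R[X]} (hp : ∀ i, p.eval (d i ^ k) = d i) :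
    aeval ((P * diagonal d * P⁻¹) ^ k) p = P * diagonal d * P⁻¹ := by
  rw [← aeval_X_pow (R := R), ← aeval_comp, aeval_conj _ _ hP, aeval_diagonal]
  simp only [eval_comp, eval_pow, eval_X, hp]

end Matrix

/-- Uniqueness of diagonalizable nonnegative-spectrum matrix roots (kernel of
Corollary 3.1): two real matrices that are diagonalizable with nonnegative eigenvalues
and share the same `τ`-th power (`τ ≥ 1`) must be equal. -/
theorem diagonalizable_nonneg_root_unique (n τ : ℕ) (hτ : 1 ≤ τ)
    (A B P Q : Matrix (Fin n) (Fin n) ℝ) (d m : Fin n → ℝ)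
    (hP : IsUnit P.det) (hQ : IsUnit Q.det)
    (hd : ∀ i, 0 ≤ d i) (hm : ∀ i, 0 ≤ m i)
    (hA : A = P * Matrix.diagonal d * P⁻¹) (hB : B = Q * Matrix.diagonal m * Q⁻¹)
    (hpow : A ^ τ = B ^ τ) : A = B := by
  set s := Finset.univ.image d ∪ Finset.univ.image m
  have hs : ∀ x ∈ s, 0 ≤ x := by
    simp only [s, Finset.mem_union, Finset.mem_image, Finset.mem_univ, true_and]
    rintro x (⟨i, rfl⟩ | ⟨i, rfl⟩)
    exacts [hd i, hm i]
  have hinj : Set.InjOn (· ^ τ) (s : Set ℝ) := fun x hx y hy =>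
    (pow_left_inj₀ (hs x hx) (hs y hy) (by omega)).mp
  obtain ⟨p, hp⟩ : ∃ p : ℝ[X], ∀ x ∈ s, p.eval (x ^ τ) = x :=
    ⟨Lagrange.interpolate s (· ^ τ) id, fun _ hx => Lagrange.eval_interpolate_at_node id hinj hx⟩
  have hpA : aeval (A ^ τ) p = A :=
    hA ▸ aeval_pow_conj_diagonal_eq_self hP fun i => hp _ (by simp [s])
  have hpB : aeval (B ^ τ) p = B :=
    hB ▸ aeval_pow_conj_diagonal_eq_self hQ fun i => hp _ (by simp [s])
  rw [← hpA, hpow, hpB]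
end
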